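/- arXiv:2512.05890 — 2 statements merged into one kernel-verified Lean document; each statement's English description precedes it below -/
import Mathlib

section
/- For n = 2k even with n ≥ 6, the meander with top composition (n, 1^{k-3}, n, 1^{k-1}) and bottom composition (1^{k-1}, n, 1^{k-3}, n) contains a cycle. -/
/-- `BlockArc l u v` holds when `u` and `v` (0-indexed positions) are joined by an
arc of the system of nested arcs determined by the composition `l`: the `i`-th part
`p = l.getD i 0` occupies positions `a, …, a + p - 1` where `a = (l.take i).sum`,
and contributes arcs joining `a + t` and `a + (p - 1 - t)` for `2t + 1 < p`. -/
def BlockArc (l : List ℕ) (u v : ℕ) : Prop :=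
  ∃ i < l.length, ∃ t : ℕ, 2 * t + 1 < l.getD i 0 ∧
    u = (l.take i).sum + t ∧ v = (l.take i).sum + (l.getD i 0 - 1 - t)

/-- The meander graph of the pair of compositions `(lam, mu)` on vertices
`0, …, n-1`: upper arcs from `lam`, lower arcs from `mu`. -/
def MeanderGraph (n : ℕ) (lam mu : List ℕ) : SimpleGraph (Fin n) :=
  SimpleGraph.fromRel (fun u v => BlockArc lam (u : ℕ) (v : ℕ) ∨ BlockArc mu (u : ℕ) (v : ℕ))

/-- A position `v` is covered by (is an endpoint of) an arc of the composition `l`. -/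
def Covered (l : List ℕ) (v : ℕ) : Prop :=
  ∃ u, BlockArc l u v ∨ BlockArc l v u

/-- A connected component of the meander graph is a cycle component when every one
of its vertices is covered by both an upper and a lower arc (i.e. has degree 2 in
the meander multigraph). -/
def IsCycleComp (n : ℕ) (lam mu : List ℕ)
    (c : (MeanderGraph n lam mu).ConnectedComponent) : Prop :=
  ∀ v : Fin n, (MeanderGraph n lam mu).connectedComponentMk v = c →
    Covered lam (v : ℕ) ∧ Covered mu (v : ℕ)

/-- The number of cycles of the meander `(lam, mu)` on `n` nodes. -/
noncomputable def numCycles (n : ℕ) (lam mu : List ℕ) : ℕ :=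
  {c : (MeanderGraph n lam mu).ConnectedComponent | IsCycleComp n lam mu c}.ncard

/-- The number of paths (including isolated vertices) of the meander `(lam, mu)`. -/
noncomputable def numPaths (n : ℕ) (lam mu : List ℕ) : ℕ :=
  {c : (MeanderGraph n lam mu).ConnectedComponent | ¬ IsCycleComp n lam mu c}.ncard

/-- The index of the meander `(lam, mu)` on `n` nodes:
twice the number of cycles plus the number of paths. -/
noncomputable def meanderIndex (n : ℕ) (lam mu : List ℕ) : ℕ :=
  2 * numCycles n lam mu + numPaths n lam mu

/-!
The six positions `k-1, k, 3k-3, 3k-2, 5k-5, 5k-4` form a hexagon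
`k-1 — k — 3k-3 — 5k-4 — 5k-5 — 3k-2 — k-1`, alternately along upper and lower arcs:
the innermost upper arc of the first big block joins `k-1, k`, the two outermost upper
arcs of the second big block join `3k-3, 5k-4` and `3k-2, 5k-5`, the two outermost lower
arcs of the first big lower block join `k-1, 3k-2` and `k, 3k-3`, and the innermost
lower arc of the second one joins `5k-5, 5k-4`. An arc meeting the hexagon has both
ends in it, so the hexagon is a whole connected component, and each of its vertices
carries an upper and a lower arc.
-/

lemma BlockArc.covered_left {l : List ℕ} {u v : ℕ} (h : BlockArc l u v) : Covered l u :=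
  ⟨v, .inr h⟩

lemma BlockArc.covered_right {l : List ℕ} {u v : ℕ} (h : BlockArc l u v) : Covered l v :=
  ⟨u, .inl h⟩

lemma not_blockArc_replicate_one {m u v : ℕ} : ¬ BlockArc (List.replicate m 1) u v := by
  rintro ⟨i, hi, t, ht, -⟩
  rw [List.length_replicate] at hi
  rw [List.getD_eq_getElem _ _ (by simpa using hi), List.getElem_replicate] at ht
  omega

lemma blockArc_singleton {p u v : ℕ} : BlockArc [p] u v ↔ 2 * u + 1 < p ∧ v = p - 1 - u := by
  constructor
  · rintro ⟨i, hi, t, ht, hu, hv⟩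
    obtain rfl : i = 0 := by simpa using hi
    simp only [List.getD_cons_zero, List.take_zero, List.sum_nil, zero_add] at ht hu hv
    omega
  · rintro ⟨hu, hv⟩
    exact ⟨0, by simp, u, by simpa using hu, by simp, by simpa using hv⟩

lemma blockArc_append {l₁ l₂ : List ℕ} {u v : ℕ} :
    BlockArc (l₁ ++ l₂) u v ↔ BlockArc l₁ u v ∨
      ∃ u' v', BlockArc l₂ u' v' ∧ u = l₁.sum + u' ∧ v = l₁.sum + v' := by
  constructor
  · rintro ⟨i, hi, t, ht, hu, hv⟩
    rw [List.length_append] at hi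
    rcases lt_or_ge i l₁.length with h | h
    · have htake : (l₁ ++ l₂).take i = l₁.take i := by
        rw [List.take_append, Nat.sub_eq_zero_of_le h.le, List.take_zero, List.append_nil]
      rw [htake, List.getD_append _ _ _ _ h] at hv
      rw [htake] at hu
      rw [List.getD_append _ _ _ _ h] at ht
      exact .inl ⟨i, h, t, ht, hu, hv⟩
    · rw [List.getD_append_right _ _ _ _ h] at ht hv
      rw [List.take_append, List.take_of_length_le h, List.sum_append] at hu hv
      exact .inr ⟨_, _, ⟨i - l₁.length, by omega, t, ht, rfl, rfl⟩, by omega, by omega⟩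
  · rintro (⟨i, hi, t, ht, hu, hv⟩ | ⟨u', v', ⟨i, hi, t, ht, hu, hv⟩, rfl, rfl⟩)
    · have htake : (l₁ ++ l₂).take i = l₁.take i := by
        rw [List.take_append, Nat.sub_eq_zero_of_le hi.le, List.take_zero, List.append_nil]
      refine ⟨i, by rw [List.length_append]; omega, t, ?_, ?_, ?_⟩
      · rwa [List.getD_append _ _ _ _ hi]
      · rwa [htake]
      · rwa [htake, List.getD_append _ _ _ _ hi]
    · have htake : (l₁ ++ l₂).take (l₁.length + i) = l₁ ++ l₂.take i := by
        rw [List.take_append, List.take_of_length_le (by omega), Nat.add_sub_cancel_left]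
      have hget : (l₁ ++ l₂).getD (l₁.length + i) 0 = l₂.getD i 0 := by
        rw [List.getD_append_right _ _ _ _ (by omega), Nat.add_sub_cancel_left]
      refine ⟨l₁.length + i, by rw [List.length_append]; omega, t, ?_, ?_, ?_⟩
      · rwa [hget]
      · rw [htake, List.sum_append, hu, Nat.add_assoc]
      · rw [htake, List.sum_append, hget, hv, Nat.add_assoc]

def topComposition (k : ℕ) : List ℕ :=
  [2 * k] ++ List.replicate (k - 3) 1 ++ [2 * k] ++ List.replicate (k - 1) 1

def bottomComposition (k : ℕ) : List ℕ :=
  List.replicate (k - 1) 1 ++ [2 * k] ++ List.replicate (k - 3) 1 ++ [2 * k]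

section Arcs

variable {k : ℕ} (hk : 3 ≤ k) {u v : ℕ}
include hk

lemma blockArc_topComposition_iff :
    BlockArc (topComposition k) u v ↔
      ∃ t < k, (u = t ∧ v = 2 * k - 1 - t) ∨ (u = 3 * k - 3 + t ∧ v = 5 * k - 4 - t) := by
  simp only [topComposition, blockArc_append, blockArc_singleton, not_blockArc_replicate_one,
    List.sum_append, List.sum_cons, List.sum_nil, List.sum_replicate, smul_eq_mul, mul_one,
    false_and, exists_false, or_false]
  constructor
  · rintro (⟨h₁, h₂⟩ | ⟨u', v', ⟨h₁, h₂⟩, hu, hv⟩)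
    · exact ⟨u, by omega, .inl ⟨rfl, by omega⟩⟩
    · exact ⟨u', by omega, .inr ⟨by omega, by omega⟩⟩
  · rintro ⟨t, ht, ⟨hu, hv⟩ | ⟨hu, hv⟩⟩
    · exact .inl ⟨by omega, by omega⟩
    · exact .inr ⟨t, 2 * k - 1 - t, ⟨by omega, rfl⟩, by omega, by omega⟩

lemma blockArc_bottomComposition_iff :
    BlockArc (bottomComposition k) u v ↔
      ∃ t < k, (u = k - 1 + t ∧ v = 3 * k - 2 - t) ∨ (u = 4 * k - 4 + t ∧ v = 6 * k - 5 - t) := by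
  simp only [bottomComposition, blockArc_append, blockArc_singleton, not_blockArc_replicate_one,
    List.sum_append, List.sum_cons, List.sum_nil, List.sum_replicate, smul_eq_mul, mul_one,
    false_or, false_and, exists_false, or_false]
  constructor
  · rintro (⟨u', v', ⟨h₁, h₂⟩, hu, hv⟩ | ⟨u', v', ⟨h₁, h₂⟩, hu, hv⟩)
    · exact ⟨u', by omega, .inl ⟨by omega, by omega⟩⟩
    · exact ⟨u', by omega, .inr ⟨by omega, by omega⟩⟩
  · rintro ⟨t, ht, ⟨hu, hv⟩ | ⟨hu, hv⟩⟩
    · exact .inl ⟨t, 2 * k - 1 - t, ⟨by omega, rfl⟩, by omega, by omega⟩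
    · exact .inr ⟨t, 2 * k - 1 - t, ⟨by omega, rfl⟩, by omega, by omega⟩

end Arcs

def IsHexagonVertex (k x : ℕ) : Prop :=
  x = k - 1 ∨ x = k ∨ x = 3 * k - 3 ∨ x = 3 * k - 2 ∨ x = 5 * k - 5 ∨ x = 5 * k - 4

section Hexagon

variable {k : ℕ} (hk : 3 ≤ k) {u v : ℕ}
include hk

lemma BlockArc.isHexagonVertex_iff_of_topComposition (h : BlockArc (topComposition k) u v) :
    IsHexagonVertex k u ↔ IsHexagonVertex k v := by
  obtain ⟨t, ht, ⟨rfl, rfl⟩ | ⟨rfl, rfl⟩⟩ := (blockArc_topComposition_iff hk).1 h <;>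
    (unfold IsHexagonVertex; omega)

lemma BlockArc.isHexagonVertex_iff_of_bottomComposition
    (h : BlockArc (bottomComposition k) u v) :
    IsHexagonVertex k u ↔ IsHexagonVertex k v := by
  obtain ⟨t, ht, ⟨rfl, rfl⟩ | ⟨rfl, rfl⟩⟩ := (blockArc_bottomComposition_iff hk).1 h <;>
    (unfold IsHexagonVertex; omega)

lemma IsHexagonVertex.covered {x : ℕ} (hx : IsHexagonVertex k x) :
    Covered (topComposition k) x ∧ Covered (bottomComposition k) x := by
  have top₁ : BlockArc (topComposition k) (k - 1) k :=
    (blockArc_topComposition_iff hk).2 ⟨k - 1, by omega, .inl ⟨rfl, by omega⟩⟩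
  have top₂ : BlockArc (topComposition k) (3 * k - 3) (5 * k - 4) :=
    (blockArc_topComposition_iff hk).2 ⟨0, by omega, .inr ⟨by omega, by omega⟩⟩
  have top₃ : BlockArc (topComposition k) (3 * k - 2) (5 * k - 5) :=
    (blockArc_topComposition_iff hk).2 ⟨1, by omega, .inr ⟨by omega, by omega⟩⟩
  have bot₁ : BlockArc (bottomComposition k) (k - 1) (3 * k - 2) :=
    (blockArc_bottomComposition_iff hk).2 ⟨0, by omega, .inl ⟨by omega, by omega⟩⟩
  have bot₂ : BlockArc (bottomComposition k) k (3 * k - 3) :=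
    (blockArc_bottomComposition_iff hk).2 ⟨1, by omega, .inl ⟨by omega, by omega⟩⟩
  have bot₃ : BlockArc (bottomComposition k) (5 * k - 5) (5 * k - 4) :=
    (blockArc_bottomComposition_iff hk).2 ⟨k - 1, by omega, .inr ⟨by omega, by omega⟩⟩
  rcases hx with rfl | rfl | rfl | rfl | rfl | rfl
  · exact ⟨top₁.covered_left, bot₁.covered_left⟩
  · exact ⟨top₁.covered_right, bot₂.covered_left⟩
  · exact ⟨top₂.covered_left, bot₂.covered_right⟩
  · exact ⟨top₃.covered_left, bot₁.covered_right⟩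
  · exact ⟨top₃.covered_right, bot₃.covered_left⟩
  · exact ⟨top₂.covered_right, bot₃.covered_right⟩

end Hexagon

lemma isCycleComp_of_closed {n : ℕ} {lam mu : List ℕ} (S : ℕ → Prop)
    (hclosed : ∀ u v, BlockArc lam u v ∨ BlockArc mu u v → (S u ↔ S v))
    (hcovered : ∀ x, S x → Covered lam x ∧ Covered mu x) {v : Fin n} (hv : S v) :
    IsCycleComp n lam mu ((MeanderGraph n lam mu).connectedComponentMk v) := by
  have hadj : ∀ {a b}, (MeanderGraph n lam mu).Adj a b → (S a ↔ S b) := by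
    rintro a b ⟨-, h | h⟩
    exacts [hclosed _ _ h, (hclosed _ _ h).symm]
  have hwalk : ∀ {a b}, (MeanderGraph n lam mu).Walk a b → S b → S a := by
    intro a b p
    induction p with
    | nil => exact id
    | cons h _ ih => exact fun hb => (hadj h).2 (ih hb)
  intro w hw
  obtain ⟨p⟩ := SimpleGraph.ConnectedComponent.exact hw
  exact hcovered _ (hwalk p hv)

/-- For even `n = 2k` with `n ≥ 6` (i.e. `k ≥ 3`), the meander with top
composition `(n, 1^{k-3}, n, 1^{k-1})` and bottom composition
`(1^{k-1}, n, 1^{k-3}, n)` (both summing to `2n + 2k - 4 = 6k - 4`)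
contains a cycle. -/
theorem stmt14 (k : ℕ) (hk : 3 ≤ k) :
    ∃ c, IsCycleComp (6 * k - 4)
      ([2 * k] ++ List.replicate (k - 3) 1 ++ [2 * k] ++ List.replicate (k - 1) 1)
      (List.replicate (k - 1) 1 ++ [2 * k] ++ List.replicate (k - 3) 1 ++ [2 * k])
      c := by
  refine ⟨_, isCycleComp_of_closed (n := 6 * k - 4) (lam := topComposition k)
    (mu := bottomComposition k) (IsHexagonVertex k) ?_ (fun _ hx => hx.covered hk)
    (v := ⟨k - 1, by omega⟩) (.inl rfl)⟩
  rintro u v (h | h)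
  exacts [h.isHexagonVertex_iff_of_topComposition hk,
    h.isHexagonVertex_iff_of_bottomComposition hk]
end

section
/- Let r_{n} denote the number of compositions μ of n with parts in {1,2} such that in the meander with top composition (n) and bottom composition μ, the vertices 1 and n lie in a common cycle. Then vertices 1 and n lie in a cycle if and only if μ begins and ends with 2, i.e., μ = (2, b_2, ..., b_{t-1}, 2); consequently r_n = c(n-4) for n ≥ 4 where c(m) is the number of compositions of m into parts in {1,2} (with c(0)=1). -/
/-- Vertices `u` and `v` lie in a common cycle of the meander `(lam, mu)`. -/
def InCommonCycle (n : ℕ) (lam mu : List ℕ) (u v : Fin n) : Prop :=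
  ∃ c, IsCycleComp n lam mu c ∧
    (MeanderGraph n lam mu).connectedComponentMk u = c ∧
    (MeanderGraph n lam mu).connectedComponentMk v = c

/-- The number of compositions of `m` into parts `1` and `2` (with `c(0) = 1`). -/
noncomputable def comps12 (m : ℕ) : ℕ :=
  {l : List ℕ | (∀ x ∈ l, x = 1 ∨ x = 2) ∧ l.sum = m}.ncard

lemma blockArc_single {n u v : ℕ} (h : BlockArc [n] u v) :
    ∃ t, 2 * t + 1 < n ∧ u = t ∧ v = n - 1 - t := by
  obtain ⟨i, hi, t, ht, hu, hv⟩ := h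
  simp only [List.length_singleton, Nat.lt_one_iff] at hi
  subst hi
  simp only [List.getD_cons_zero, List.take_zero, List.sum_nil, Nat.zero_add] at ht hu hv
  exact ⟨t, ht, hu, hv⟩

lemma blockArc_single_intro {n t : ℕ} (ht : 2 * t + 1 < n) : BlockArc [n] t (n - 1 - t) :=
  ⟨0, by simp, t, by simpa using ht, by simp, by simp⟩

lemma sum_split {l : List ℕ} {i : ℕ} (hi : i < l.length) :
    (l.take i).sum + l.getD i 0 + (l.drop (i+1)).sum = l.sum := by
  have h1 := List.sum_take_add_sum_drop l (i+1)
  rw [List.take_succ] at h1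
  rw [List.getD_eq_getElem l 0 hi]
  have h2 : l[i]?.toList = [l[i]] := by simp [List.getElem?_eq_getElem hi]
  rw [h2] at h1
  rw [List.sum_append, List.sum_cons, List.sum_nil] at h1
  omega

lemma blockArc_mu {mu : List ℕ} (h12 : ∀ x ∈ mu, x = 1 ∨ x = 2) {u v : ℕ}
    (h : BlockArc mu u v) :
    ∃ i < mu.length, mu.getD i 0 = 2 ∧ u = (mu.take i).sum ∧ v = u + 1 := by
  obtain ⟨i, hi, t, ht, hu, hv⟩ := h
  have hmem : mu.getD i 0 ∈ mu := by
    rw [List.getD_eq_getElem mu 0 hi]; exact List.getElem_mem hi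
  have h2 : mu.getD i 0 = 2 := by rcases h12 _ hmem with h | h <;> omega
  have ht0 : t = 0 := by omega
  exact ⟨i, hi, h2, by omega, by omega⟩

lemma blockArc_mu_intro {mu : List ℕ} {i : ℕ} (hi : i < mu.length)
    (h2 : mu.getD i 0 = 2) : BlockArc mu (mu.take i).sum ((mu.take i).sum + 1) :=
  ⟨i, hi, 0, by omega, by omega, by omega⟩

lemma eq_nil_of_sum_zero {l : List ℕ} (h12 : ∀ x ∈ l, x = 1 ∨ x = 2) (h : l.sum = 0) :
    l = [] := by
  cases l with
  | nil => rfl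
  | cons a t =>
    have := h12 a (by simp)
    simp only [List.sum_cons] at h
    omega

lemma decomp {mu : List ℕ} (h12 : ∀ x ∈ mu, x = 1 ∨ x = 2) (hs : 4 ≤ mu.sum)
    (h1 : mu.head? = some 2) (h2 : mu.getLast? = some 2) :
    ∃ m, mu = 2 :: (m ++ [2]) ∧ (∀ x ∈ m, x = 1 ∨ x = 2) ∧ m.sum + 4 = mu.sum := by
  cases mu with
  | nil => simp at h1
  | cons a rest =>
    have ha : a = 2 := by simpa using h1
    subst ha
    have hne : rest ≠ [] := by
      intro h; subst h; simp at hs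
    have hdec := List.dropLast_append_getLast hne
    refine ⟨rest.dropLast, ?_, ?_, ?_⟩
    · have hlast : rest.getLast hne = 2 := by
        have : (2 :: rest).getLast? = some (rest.getLast hne) := by
          conv_lhs => rw [← hdec]
          rw [← List.cons_append]
          exact List.getLast?_concat
        rw [h2] at this
        exact (Option.some_injective _ this.symm)
      have hdec2 : rest.dropLast ++ [2] = rest := by rw [← hlast]; exact hdec
      rw [hdec2]
    · intro x hx
      exact h12 x (by
        have : x ∈ rest := (List.dropLast_sublist rest).mem hx
        simp [this])
    · have hlast : rest.getLast hne = 2 := by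
        have : (2 :: rest).getLast? = some (rest.getLast hne) := by
          conv_lhs => rw [← hdec]
          rw [← List.cons_append]
          exact List.getLast?_concat
        rw [h2] at this
        exact (Option.some_injective _ this.symm)
      have : rest.sum = rest.dropLast.sum + 2 := by
        conv_lhs => rw [← hdec]
        simp [hlast]
      simp [List.sum_cons, this]
      omega

lemma mu_arc_cases {m : List ℕ} {u v : ℕ}
    (h12 : ∀ x ∈ (2 :: (m ++ [2])), x = 1 ∨ x = 2)
    (h : BlockArc (2 :: (m ++ [2])) u v) :
    (u = 0 ∧ v = 1) ∨ (u = m.sum + 2 ∧ v = m.sum + 3) ∨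
      (2 ≤ u ∧ v = u + 1 ∧ u + 2 ≤ m.sum + 2) := by
  obtain ⟨i, hi, hg, hu, hv⟩ := blockArc_mu h12 h
  subst hv
  cases i with
  | zero => left; simp at hu; omega
  | succ j =>
    have hj : j < m.length + 1 := by
      simpa using hi
    rw [List.take_succ_cons] at hu
    rcases Nat.lt_or_ge j m.length with hjm | hjm
    · right; right
      rw [List.take_append_of_le_length (Nat.le_of_lt hjm)] at hu
      have hgm : m.getD j 0 = 2 := by
        rw [List.getD_eq_getElem _ 0 hjm]
        have hlen : j < (m ++ [2]).length := by simp; omega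
        rw [List.getD_cons_succ, List.getD_eq_getElem _ 0 hlen] at hg
        rwa [List.getElem_append_left hjm] at hg
      have hb := sum_split hjm
      simp only [List.sum_cons] at hu
      omega
    · have hjm' : j = m.length := by omega
      subst hjm'
      right; left
      rw [List.take_left] at hu
      simp only [List.sum_cons] at hu
      omega

/-- closure of S = {0,1,n-2,n-1} under arcs when mu = 2 :: (m ++ [2]). -/
lemma closed_step {n : ℕ} (hn : 4 ≤ n) {m : List ℕ}
    (h12 : ∀ x ∈ (2 :: (m ++ [2])), x = 1 ∨ x = 2) (hsum : m.sum + 4 = n)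
    {u v : ℕ}
    (hu : u = 0 ∨ u = 1 ∨ u = n - 2 ∨ u = n - 1)
    (h : (BlockArc [n] u v ∨ BlockArc (2 :: (m ++ [2])) u v) ∨
         (BlockArc [n] v u ∨ BlockArc (2 :: (m ++ [2])) v u)) :
    v = 0 ∨ v = 1 ∨ v = n - 2 ∨ v = n - 1 := by
  rcases h with (h | h) | (h | h)
  · obtain ⟨t, ht, h1, h2⟩ := blockArc_single h; omega
  · rcases mu_arc_cases h12 h with ⟨h1, h2⟩ | ⟨h1, h2⟩ | ⟨h1, h2, h3⟩ <;> omega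
  · obtain ⟨t, ht, h1, h2⟩ := blockArc_single h; omega
  · rcases mu_arc_cases h12 h with ⟨h1, h2⟩ | ⟨h1, h2⟩ | ⟨h1, h2, h3⟩ <;> omega

lemma walk_closed {n : ℕ} (hn : 4 ≤ n) {m : List ℕ} {mu : List ℕ}
    (hmu : mu = 2 :: (m ++ [2]))
    (h12 : ∀ x ∈ mu, x = 1 ∨ x = 2) (hsum : m.sum + 4 = n)
    {a b : Fin n} (w : (MeanderGraph n [n] mu).Walk a b)
    (ha : (a : ℕ) = 0 ∨ (a : ℕ) = 1 ∨ (a : ℕ) = n - 2 ∨ (a : ℕ) = n - 1) :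
    (b : ℕ) = 0 ∨ (b : ℕ) = 1 ∨ (b : ℕ) = n - 2 ∨ (b : ℕ) = n - 1 := by
  induction w with
  | nil => exact ha
  | @cons x y z hadj p ih =>
    apply ih
    rw [MeanderGraph, SimpleGraph.fromRel_adj] at hadj
    subst hmu
    exact closed_step hn h12 hsum ha (by tauto)

lemma head_of_covered {mu : List ℕ} (h12 : ∀ x ∈ mu, x = 1 ∨ x = 2)
    (h : Covered mu 0) : mu.head? = some 2 := by
  obtain ⟨u, h | h⟩ := h
  · obtain ⟨i, hi, hg, hu, hv⟩ := blockArc_mu h12 h; omega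
  · obtain ⟨i, hi, hg, hu, hv⟩ := blockArc_mu h12 h
    cases mu with
    | nil => simp at hi
    | cons a rest =>
      cases i with
      | zero =>
        simp only [List.getD_cons_zero] at hg
        simp [hg]
      | succ j =>
        rw [List.take_succ_cons, List.sum_cons] at hu
        have := h12 a (by simp)
        omega

lemma last_of_covered {n : ℕ} (hn : 4 ≤ n) {mu : List ℕ}
    (h12 : ∀ x ∈ mu, x = 1 ∨ x = 2) (hs : mu.sum = n)
    (h : Covered mu (n - 1)) : mu.getLast? = some 2 := by
  obtain ⟨u, h | h⟩ := h
  · obtain ⟨i, hi, hg, hu, hv⟩ := blockArc_mu h12 h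
    have hsplit := sum_split hi
    have htake : (mu.take i).sum = n - 2 := by omega
    have hdrop : (mu.drop (i+1)).sum = 0 := by omega
    have hnil : mu.drop (i+1) = [] :=
      eq_nil_of_sum_zero (fun x hx => h12 x (List.mem_of_mem_drop hx)) hdrop
    have hmu : mu = mu.take i ++ [mu[i]] := by
      conv_lhs => rw [← List.take_append_drop (i+1) mu]
      rw [hnil, List.take_succ, List.getElem?_eq_getElem hi]
      simp
    rw [List.getD_eq_getElem _ 0 hi] at hg
    conv_lhs => rw [hmu]
    rw [List.getLast?_concat, hg]
  · obtain ⟨i, hi, hg, hu, hv⟩ := blockArc_mu h12 h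
    have hsplit := sum_split hi
    omega

lemma main_iff {n : ℕ} (hn : 4 ≤ n) (mu : List ℕ)
    (h12 : ∀ x ∈ mu, x = 1 ∨ x = 2) (hs : mu.sum = n)
    {p0 : (0:ℕ) < n} {p1 : n - 1 < n} :
    InCommonCycle n [n] mu ⟨0, p0⟩ ⟨n - 1, p1⟩ ↔
      (mu.head? = some 2 ∧ mu.getLast? = some 2) := by
  constructor
  · rintro ⟨c, hcyc, hc0, hcn⟩
    have cov0 := (hcyc _ hc0).2
    have covn := (hcyc _ hcn).2
    exact ⟨head_of_covered h12 cov0, last_of_covered hn h12 hs covn⟩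
  · rintro ⟨hh, hl⟩
    obtain ⟨m, hmu, hm12, hmsum⟩ := decomp h12 (hs ▸ hn) hh hl
    rw [hs] at hmsum
    -- arcs
    have arcA : BlockArc [n] 0 (n - 1) := by
      have := blockArc_single_intro (n := n) (t := 0) (by omega)
      simpa using this
    have arcB : BlockArc [n] 1 (n - 2) := by
      have := blockArc_single_intro (n := n) (t := 1) (by omega)
      have e : n - 1 - 1 = n - 2 := by omega
      rwa [e] at this
    have arcC : BlockArc mu 0 1 := by
      have h0 : (0:ℕ) < mu.length := by rw [hmu]; simp
      have hg : mu.getD 0 0 = 2 := by rw [hmu]; rfl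
      have := blockArc_mu_intro h0 hg
      simpa using this
    have arcD : BlockArc mu (n - 2) (n - 1) := by
      have hi : m.length + 1 < mu.length := by rw [hmu]; simp
      have hg : mu.getD (m.length + 1) 0 = 2 := by
        rw [hmu, List.getD_cons_succ]
        have hlen : m.length < (m ++ [2]).length := by simp
        rw [List.getD_eq_getElem _ 0 hlen]
        exact List.getElem_concat_length rfl _
      have := blockArc_mu_intro hi hg
      have htake : (mu.take (m.length + 1)).sum = n - 2 := by
        rw [hmu, List.take_succ_cons, List.take_append_of_le_length (le_refl _),
          List.take_length, List.sum_cons]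
        omega
      rw [htake] at this
      have e : n - 2 + 1 = n - 1 := by omega
      rwa [e] at this
    set G := MeanderGraph n [n] mu with hG
    have hadj0 : G.Adj ⟨0, p0⟩ ⟨n - 1, p1⟩ := by
      rw [hG, MeanderGraph, SimpleGraph.fromRel_adj]
      constructor
      · intro hcon
        have : (0:ℕ) = n - 1 := congrArg Fin.val hcon
        omega
      · exact Or.inl (Or.inl arcA)
    refine ⟨G.connectedComponentMk ⟨0, p0⟩, ?_, rfl, ?_⟩
    · intro v hv
      have hreach : G.Reachable ⟨0, p0⟩ v :=
        (SimpleGraph.ConnectedComponent.eq.1 hv).symm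
      obtain ⟨w⟩ := hreach
      have hS := walk_closed hn hmu h12 hmsum w (Or.inl rfl)
      rcases hS with h | h | h | h <;> rw [h]
      · exact ⟨⟨n - 1, Or.inr arcA⟩, ⟨1, Or.inr arcC⟩⟩
      · exact ⟨⟨n - 2, Or.inr arcB⟩, ⟨0, Or.inl arcC⟩⟩
      · exact ⟨⟨1, Or.inl arcB⟩, ⟨n - 1, Or.inr arcD⟩⟩
      · exact ⟨⟨0, Or.inl arcA⟩, ⟨n - 2, Or.inl arcD⟩⟩
    · exact SimpleGraph.ConnectedComponent.eq.2 hadj0.symm.reachable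


/-- For `n ≥ 4` and a bottom composition `μ` of `n` with parts in `{1,2}`, the
vertices `1` and `n` of the meander with top composition `(n)` lie in a common
cycle iff `μ` begins and ends with `2`; consequently the number of such `μ` is
the number of compositions of `n−4` into parts `1` and `2`. -/
theorem stmt18 (n : ℕ) (hn : 4 ≤ n) :
    (∀ mu : List ℕ, (∀ x ∈ mu, x = 1 ∨ x = 2) → mu.sum = n →
      (InCommonCycle n [n] mu ⟨0, by omega⟩ ⟨n - 1, by omega⟩ ↔
        (mu.head? = some 2 ∧ mu.getLast? = some 2))) ∧
    {mu : List ℕ | (∀ x ∈ mu, x = 1 ∨ x = 2) ∧ mu.sum = n ∧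
      InCommonCycle n [n] mu ⟨0, by omega⟩ ⟨n - 1, by omega⟩}.ncard
      = comps12 (n - 4) := by
  constructor
  · intro mu h12 hs
    exact main_iff hn mu h12 hs
  · have hsetEq : {mu : List ℕ | (∀ x ∈ mu, x = 1 ∨ x = 2) ∧ mu.sum = n ∧
        InCommonCycle n [n] mu ⟨0, by omega⟩ ⟨n - 1, by omega⟩}
        = (fun l => 2 :: (l ++ [2])) ''
          {l : List ℕ | (∀ x ∈ l, x = 1 ∨ x = 2) ∧ l.sum = n - 4} := by
      ext mu
      simp only [Set.mem_setOf_eq, Set.mem_image]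
      constructor
      · rintro ⟨h12, hs, hcyc⟩
        obtain ⟨hh, hl⟩ := (main_iff hn mu h12 hs).1 hcyc
        obtain ⟨m, hmu, hm12, hmsum⟩ := decomp h12 (hs ▸ hn) hh hl
        exact ⟨m, ⟨hm12, by omega⟩, hmu.symm⟩
      · rintro ⟨l, ⟨hl12, hlsum⟩, rfl⟩
        have h12 : ∀ x ∈ (2 :: (l ++ [2])), x = 1 ∨ x = 2 := by
          intro x hx
          rcases List.mem_cons.1 hx with h | h
          · right; exact h
          · rcases List.mem_append.1 h with h | h
            · exact hl12 x h
            · right; simpa using h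
        have hs : (2 :: (l ++ [2])).sum = n := by
          simp [List.sum_append]; omega
        refine ⟨h12, hs, ?_⟩
        exact (main_iff hn _ h12 hs).2
          ⟨rfl, by rw [← List.cons_append]; exact List.getLast?_concat⟩
    rw [hsetEq, comps12]
    apply Set.ncard_image_of_injective
    intro a b hab
    simpa using hab
end
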